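/- arXiv:1603.02372 — 2 statements merged into one kernel-verified Lean document; each statement's English description precedes it below -/
import Mathlib

section
/- Let Γ be a finite simple graph of weak type II and let v₁, v₂, v₃ be vertices of Γ. Suppose v₁ and v₃ lie in different connected components of the induced subgraph on the complement of St(v₂). Then v₁ and v₂ lie in the same connected component of the induced subgraph on the complement of St(v₃), and v₃ and v₂ lie in the same connected component of the induced subgraph on the complement of St(v₁). -/
open SimpleGraph

variable {V : Type*}

/-- The closed star of a vertex: the vertex together with its neighbors. -/
def gstar (G : SimpleGraph V) (v : V) : Set V := insert v (G.neighborSet v)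

/-- `a` and `b` lie in the same connected component of the subgraph induced on `s`. -/
def SameComp (G : SimpleGraph V) (s : Set V) (a b : V) : Prop :=
  ∃ (ha : a ∈ s) (hb : b ∈ s), (G.induce s).Reachable ⟨a, ha⟩ ⟨b, hb⟩

/-- `a` and `b` lie in different connected components of the subgraph induced on `s`. -/
def DiffComp (G : SimpleGraph V) (s : Set V) (a b : V) : Prop :=
  a ∈ s ∧ b ∈ s ∧ ¬ SameComp G s a b

/-- `Γ` is of weak type II. -/
def WeakTypeII (G : SimpleGraph V) : Prop :=
  G.Connected ∧ ∀ v w : V, G.dist v w = 2 →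
    (G.induce ((G.neighborSet v ∩ G.neighborSet w)ᶜ)).Connected

/-- `Γ` is of type II. -/
def TypeII (G : SimpleGraph V) : Prop :=
  G.Connected ∧ ∀ v w : V, v ≠ w →
    (G.induce ((G.neighborSet v ∩ G.neighborSet w)ᶜ)).Connected

/-!
Put `K = lk(v₂) ∩ lk(v₃)`. As `v₃ ∉ St(v₂)`, either `K` is empty or `v₂, v₃` are at distance 2,
so `Γ - K` is connected and contains a path from `v₁` to `v₂`. Where this path leaves the
component `C` of `v₁` in `Γ - St(v₂)`, it steps from some `a ∈ C` to some `u ∈ lk(v₂) \ K`,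
so `u ∉ St(v₃)`. Since `v₃` lies in another component of `Γ - St(v₂)`, the component `C` misses
`St(v₃)`, and `v₁ ⋯ a - u - v₂` is a path in `Γ - St(v₃)`. The second claim is the first one
with `v₁` and `v₃` exchanged.
-/

namespace SameComp

variable {G : SimpleGraph V} {s : Set V} {a b c : V}

lemma mem_right (h : SameComp G s a b) : b ∈ s := h.2.1

lemma refl (ha : a ∈ s) : SameComp G s a a := ⟨ha, ha, .rfl⟩

lemma symm (h : SameComp G s a b) : SameComp G s b a :=
  let ⟨ha, hb, hr⟩ := h
  ⟨hb, ha, hr.symm⟩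

lemma trans (h₁ : SameComp G s a b) (h₂ : SameComp G s b c) : SameComp G s a c :=
  let ⟨ha, _, hr₁⟩ := h₁
  let ⟨_, hc, hr₂⟩ := h₂
  ⟨ha, hc, hr₁.trans hr₂⟩

lemma of_adj (ha : a ∈ s) (hb : b ∈ s) (hab : G.Adj a b) : SameComp G s a b :=
  ⟨ha, hb, Adj.reachable (induce_adj.2 hab)⟩

end SameComp

section Walks

variable {G : SimpleGraph V} {s t : Set V} {a b : V}

lemma sameComp_iff_exists_walk :
    SameComp G s a b ↔ ∃ p : G.Walk a b, ∀ x ∈ p.support, x ∈ s := by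
  constructor
  · rintro ⟨ha, hb, ⟨p⟩⟩
    refine ⟨p.map (Embedding.induce s).toHom, fun x hx => ?_⟩
    obtain ⟨y, -, rfl⟩ := List.mem_map.1 ((p.support_map _) ▸ hx)
    exact y.2
  · rintro ⟨p, hp⟩
    exact ⟨_, _, (p.induce s hp).reachable⟩

lemma SameComp.of_mem_support (p : G.Walk a b) (hp : ∀ x ∈ p.support, x ∈ s) {x : V}
    (hx : x ∈ p.support) : SameComp G s a x := by
  classical
  exact sameComp_iff_exists_walk.2
    ⟨p.takeUntil x hx, fun y hy => hp y (p.support_takeUntil_subset_support hx hy)⟩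

lemma SameComp.of_forall_sameComp_mem (h : SameComp G s a b)
    (ht : ∀ x, SameComp G s a x → x ∈ t) : SameComp G t a b := by
  obtain ⟨p, hp⟩ := sameComp_iff_exists_walk.1 h
  exact sameComp_iff_exists_walk.2 ⟨p, fun x hx => ht x (.of_mem_support p hp hx)⟩

lemma SimpleGraph.Walk.exists_dart_sameComp_notMem (p : G.Walk a b) (ha : a ∈ s) (hb : b ∉ s) :
    ∃ d ∈ p.darts, SameComp G s a d.fst ∧ d.snd ∉ s := by
  obtain ⟨d, hd, hfst, hsnd⟩ :=
    p.exists_boundary_dart {x | SameComp G s a x} (.refl ha) fun h => hb h.mem_right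
  exact ⟨d, hd, hfst, fun hs => hsnd (hfst.trans (.of_adj hfst.mem_right hs d.adj))⟩

end Walks

lemma DiffComp.symm {G : SimpleGraph V} {s : Set V} {a c : V} (hd : DiffComp G s a c) :
    DiffComp G s c a :=
  ⟨hd.2.1, hd.1, fun h => hd.2.2 h.symm⟩

lemma DiffComp.notMem_gstar {G : SimpleGraph V} {s : Set V} {a c x : V}
    (hd : DiffComp G s a c) (hx : SameComp G s a x) : x ∉ gstar G c := by
  rintro (rfl | hxc)
  · exact hd.2.2 hx
  · exact hd.2.2 (hx.trans (.of_adj hx.mem_right hd.2.1 hxc.symm))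

lemma WeakTypeII.connected_induce_compl_commonNeighbors {G : SimpleGraph V} (h : WeakTypeII G)
    {v w : V} (hne : v ≠ w) (hadj : ¬ G.Adj v w) :
    (G.induce (G.commonNeighbors v w)ᶜ).Connected := by
  rcases (G.commonNeighbors v w).eq_empty_or_nonempty with hK | hK
  · rw [hK, Set.compl_empty]
    exact (Iso.connected_iff (induceUnivIso G)).2 h.1
  · have hdist : (G.dist v w : ℕ∞) = 2 := by
      rw [(h.1.preconnected v w).coe_dist_eq_edist, edist_eq_two_iff]
      exact ⟨hne, hadj, hK⟩
    exact h.2 v w (by exact_mod_cast hdist)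

lemma WeakTypeII.sameComp_compl_gstar {G : SimpleGraph V} (h : WeakTypeII G) {v₁ v₂ v₃ : V}
    (hd : DiffComp G (gstar G v₂)ᶜ v₁ v₃) : SameComp G (gstar G v₃)ᶜ v₁ v₂ := by
  have h₁ : v₁ ≠ v₂ ∧ ¬ G.Adj v₂ v₁ := not_or.1 hd.1
  have h₃ : v₃ ≠ v₂ ∧ ¬ G.Adj v₂ v₃ := not_or.1 hd.2.1
  have hv₂ : v₂ ∉ gstar G v₃ := by
    rintro (h | h)
    exacts [h₃.1 h.symm, h₃.2 h.symm]
  set K := G.commonNeighbors v₂ v₃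
  have hK := h.connected_induce_compl_commonNeighbors h₃.1.symm h₃.2
  have hv₁K : v₁ ∉ K := fun hv => h₁.2 hv.1
  have hv₂K : v₂ ∉ K := fun hv => G.irrefl hv.1
  obtain ⟨p, hp⟩ := sameComp_iff_exists_walk.1
    (⟨hv₁K, hv₂K, hK.preconnected _ _⟩ : SameComp G Kᶜ v₁ v₂)
  obtain ⟨⟨⟨a, u⟩, hau⟩, hd_mem, ha, hu⟩ :=
    p.exists_dart_sameComp_notMem hd.1 (fun hv => hv (Set.mem_insert v₂ _))
  have hua : G.Adj v₂ u := by
    rcases not_not.1 hu with rfl | hu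
    exacts [(ha.mem_right (Or.inr hau.symm)).elim, hu]
  have huK : u ∉ K := hp u (p.dart_snd_mem_support_of_mem_darts hd_mem)
  have hu₃ : u ∉ gstar G v₃ := by
    rintro (rfl | hu₃)
    exacts [h₃.2 hua, huK ⟨hua, hu₃⟩]
  have hv₁a : SameComp G (gstar G v₃)ᶜ v₁ a :=
    ha.of_forall_sameComp_mem fun x hx => hd.notMem_gstar hx
  exact hv₁a.trans ((SameComp.of_adj hv₁a.mem_right hu₃ hau).trans (.of_adj hu₃ hv₂ hua.symm))

theorem stmt_4_general (G : SimpleGraph V) (h : WeakTypeII G)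
    (v₁ v₂ v₃ : V) (hdiff : DiffComp G (gstar G v₂)ᶜ v₁ v₃) :
    SameComp G (gstar G v₃)ᶜ v₁ v₂ ∧ SameComp G (gstar G v₁)ᶜ v₃ v₂ :=
  ⟨h.sameComp_compl_gstar hdiff, h.sameComp_compl_gstar hdiff.symm⟩

/-- Γ of weak type II; if `v₁` and `v₃` lie in different components of the
complement of `St(v₂)`, then `v₁, v₂` lie in the same component of the complement of
`St(v₃)`, and `v₃, v₂` lie in the same component of the complement of `St(v₁)`. -/
theorem stmt_4 [Fintype V] (G : SimpleGraph V) (h : WeakTypeII G)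
    (v₁ v₂ v₃ : V) (hdiff : DiffComp G (gstar G v₂)ᶜ v₁ v₃) :
    SameComp G (gstar G v₃)ᶜ v₁ v₂ ∧ SameComp G (gstar G v₁)ᶜ v₃ v₂ :=
  stmt_4_general G h v₁ v₂ v₃ hdiff
end

section
/- Let Γ be a finite simple graph of type II and let S be a finite nonempty set of vertices of Γ with |S| = n. Then there exists a filtration E₁ ⊊ E₂ ⊊ ⋯ ⊊ Eₙ = S such that |E_i| = i for each i and each E_i is tight in S. -/
open SimpleGraph

variable {V : Type*}

/-- `E` is tight in `S`: for every `u ∈ S \ E`, all vertices of `E \ St(u)` lie in a single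
connected component of the induced subgraph on the complement of `St(u)`. -/
def Tight (G : SimpleGraph V) (S E : Set V) : Prop :=
  E ⊆ S ∧ ∀ u ∈ S \ E, ∀ a ∈ E, ∀ b ∈ E,
    a ∉ gstar G u → b ∉ gstar G u → SameComp G (gstar G u)ᶜ a b

/-- `a <_E b`: there is `k ∈ E` such that `b` and `k` lie in different connected components
of the induced subgraph on the complement of `St(a)`. -/
def ltE (G : SimpleGraph V) (E : Set V) (a b : V) : Prop :=
  ∃ k ∈ E, DiffComp G (gstar G a)ᶜ b k

lemma sc_refl (G : SimpleGraph V) {s : Set V} {a : V} (ha : a ∈ s) : SameComp G s a a :=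
  ⟨ha, ha, Reachable.refl _⟩

lemma sc_symm (G : SimpleGraph V) {s : Set V} {a b : V} (h : SameComp G s a b) :
    SameComp G s b a := by
  obtain ⟨ha, hb, r⟩ := h; exact ⟨hb, ha, r.symm⟩

lemma sc_trans (G : SimpleGraph V) {s : Set V} {a b c : V}
    (h1 : SameComp G s a b) (h2 : SameComp G s b c) : SameComp G s a c := by
  obtain ⟨ha, hb, r1⟩ := h1; obtain ⟨hb', hc, r2⟩ := h2
  exact ⟨ha, hc, r1.trans r2⟩

lemma sc_adj (G : SimpleGraph V) {s : Set V} {a b : V} (ha : a ∈ s) (hb : b ∈ s)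
    (h : G.Adj a b) : SameComp G s a b :=
  ⟨ha, hb, Adj.reachable (by simpa using h)⟩

lemma mem_gstar_self (G : SimpleGraph V) (v : V) : v ∈ gstar G v := Set.mem_insert _ _

lemma gstar_symm (G : SimpleGraph V) {a b : V} (h : a ∉ gstar G b) : b ∉ gstar G a := by
  intro hb
  rcases hb with hb | hb
  · exact h (hb ▸ Set.mem_insert _ _)
  · exact h (Set.mem_insert_of_mem _ hb.symm)

/-- Key path-truncation lemma (walk induction). -/
lemma L2_aux (G : SimpleGraph V) {s₀ : Set V} {x b c : V} (hx : x ∈ s₀)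
    (hs₀ : ∀ y ∈ s₀, G.Adj x y → ¬ G.Adj b y)
    (hbx : b ∉ gstar G x) (hxb : x ∉ gstar G b)
    (hcomp : ∀ y, SameComp G (gstar G x)ᶜ c y → y ∉ gstar G b) :
    ∀ (P X : s₀) (_ : (G.induce s₀).Walk P X), (X : V) = x →
      (P : V) ∉ gstar G x → SameComp G (gstar G x)ᶜ c P →
      SameComp G (gstar G b)ᶜ c P → SameComp G (gstar G b)ᶜ c x := by
  intro P X W
  induction W with
  | nil => intro hX h1 _ _; exact absurd (hX ▸ Set.mem_insert _ _) h1
  | @cons P Q X hadj W ih =>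
    intro hX hP hcP hbP
    have hPQ : G.Adj (P : V) (Q : V) := hadj
    have hPb : (P : V) ∉ gstar G b := hcomp _ hcP
    by_cases hQ : (Q : V) ∈ gstar G x
    · rcases hQ with hQx | hQl
      · -- Q = x : then P adjacent to x, contradiction with P ∉ gstar x
        exact absurd (Set.mem_insert_of_mem _ (hQx ▸ hPQ).symm) hP
      · -- Q ∈ lk x, hence Q ∉ lk b, Q ≠ b
        have hQb : (Q : V) ∉ gstar G b := by
          intro hmem
          rcases hmem with hQeq | hQad
          · exact hbx (hQeq ▸ Set.mem_insert_of_mem _ hQl)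
          · exact hs₀ _ Q.2 hQl hQad
        exact sc_trans G (sc_trans G hbP (sc_adj G hPb hQb hPQ))
          (sc_adj G hQb hxb hQl.symm)
    · have hcQ : SameComp G (gstar G x)ᶜ c Q := sc_trans G hcP (sc_adj G hP hQ hPQ)
      have hQb : (Q : V) ∉ gstar G b := hcomp _ hcQ
      exact ih hX hQ hcQ (sc_trans G hbP (sc_adj G hPb hQb hPQ))

/-- Main connectivity lemma: if the component of `c` in `St(x)ᶜ` avoids `St(b)`,
then `c` and `x` are connected in `St(b)ᶜ`. -/
lemma L2 (G : SimpleGraph V) (h : TypeII G) {x b c : V}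
    (hbx : b ∉ gstar G x) (hc : c ∉ gstar G x) (hcb : c ∉ gstar G b)
    (hcomp : ∀ y, SameComp G (gstar G x)ᶜ c y → y ∉ gstar G b) :
    SameComp G (gstar G b)ᶜ c x := by
  have hxb : x ∉ gstar G b := gstar_symm G hbx
  have hne : x ≠ b := fun e => hxb (e ▸ Set.mem_insert _ _)
  set s₀ : Set V := (G.neighborSet x ∩ G.neighborSet b)ᶜ with hs₀def
  have hx : x ∈ s₀ := fun hmem => G.irrefl hmem.1
  have hcs : c ∈ s₀ := fun hmem => hc (Set.mem_insert_of_mem _ hmem.1)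
  obtain ⟨W⟩ := (h.2 x b hne).preconnected ⟨c, hcs⟩ ⟨x, hx⟩
  exact L2_aux G hx (fun y hy hxy hby => hy ⟨hxy, hby⟩) hbx hxb hcomp ⟨c, hcs⟩ ⟨x, hx⟩ W rfl hc
    (sc_refl G hc) (sc_refl G hcb)

lemma sc_mem_left (G : SimpleGraph V) {s : Set V} {a b : V} (h : SameComp G s a b) :
    a ∈ s := by obtain ⟨ha, _, _⟩ := h; exact ha

lemma sc_mem_right (G : SimpleGraph V) {s : Set V} {a b : V} (h : SameComp G s a b) :
    b ∈ s := by obtain ⟨_, hb, _⟩ := h; exact hb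

lemma ltE_irrefl (G : SimpleGraph V) (E : Set V) (w : V) : ¬ ltE G E w w := by
  rintro ⟨k, _, hw, _, _⟩
  exact hw (Set.mem_insert _ _)

lemma ltE_trans (G : SimpleGraph V) (h : TypeII G) {S E : Set V} (hT : Tight G S E)
    {w u v : V} (hu : u ∈ S \ E) (h1 : ltE G E w u) (h2 : ltE G E u v) : ltE G E w v := by
  obtain ⟨k, hkE, hu', hk', hnuk⟩ := h1
  obtain ⟨k', hk'E, hv2, hk2, hnvk'⟩ := h2
  -- u ∉ gstar w, k ∉ gstar w
  -- k ∉ gstar u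
  have hku : k ∉ gstar G u := by
    intro hmem
    rcases hmem with he | ha
    · exact hnuk (by rw [he]; exact sc_refl G hu')
    · exact hnuk (sc_adj G hu' hk' ha)
  have hwu : w ∉ gstar G u := gstar_symm G hu'
  -- component of k in (gstar w)ᶜ avoids gstar u
  have hcompk : ∀ y, SameComp G (gstar G w)ᶜ k y → y ∉ gstar G u := by
    intro y hy hmem
    rcases hmem with he | ha
    · exact hnuk (sc_symm G (by rw [← he]; exact hy))
    · exact hnuk (sc_symm G (sc_trans G hy (sc_adj G (sc_mem_right G hy) hu' ha.symm)))
  -- w ~ k in (gstar u)ᶜ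
  have hwk : SameComp G (gstar G u)ᶜ k w := L2 G h hu' hk' hku hcompk
  -- tightness at u : k ~ k' in (gstar u)ᶜ
  have hkk' : SameComp G (gstar G u)ᶜ k k' := hT.2 u hu k hkE k' hk'E hku hk2
  -- ¬ v ~ w in (gstar u)ᶜ
  have hnvw : ¬ SameComp G (gstar G u)ᶜ v w := by
    intro hvw
    exact hnvk' (sc_trans G (sc_trans G hvw (sc_symm G hwk)) hkk')
  -- v ∉ gstar w
  have hvw : v ∉ gstar G w := by
    intro hmem
    rcases hmem with he | ha
    · exact hnvw (by rw [he]; exact sc_refl G hwu)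
    · exact hnvw (sc_adj G hv2 hwu (show G.Adj w v from ha).symm)
  -- component of v in (gstar u)ᶜ avoids gstar w
  have hcompv : ∀ y, SameComp G (gstar G u)ᶜ v y → y ∉ gstar G w := by
    intro y hy hmem
    rcases hmem with he | ha
    · exact hnvw (by rw [← he]; exact hy)
    · exact hnvw (sc_trans G hy (sc_adj G (sc_mem_right G hy) hwu ha.symm))
  -- v ~ u in (gstar w)ᶜ
  have hvu : SameComp G (gstar G w)ᶜ v u := L2 G h hwu hv2 hvw hcompv
  refine ⟨k, hkE, hvw, hk', ?_⟩
  intro hvk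
  exact hnuk (sc_trans G (sc_symm G hvu) hvk)

lemma tight_singleton (G : SimpleGraph V) {S : Set V} {v : V} (hv : v ∈ S) :
    Tight G S {v} := by
  refine ⟨Set.singleton_subset_iff.mpr hv, ?_⟩
  rintro u _ a rfl b rfl ha _
  exact sc_refl G ha

lemma tight_extend [Fintype V] (G : SimpleGraph V) (h : TypeII G) {S E : Set V}
    (hT : Tight G S E) (hne : (S \ E).Nonempty) :
    ∃ u ∈ S \ E, Tight G S (insert u E) := by
  classical
  set r : V → V → Prop := fun a b => ltE G E a b ∧ a ∈ S \ E ∧ b ∈ S \ E with hr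
  haveI : IsTrans V r := ⟨fun a b c h1 h2 =>
    ⟨ltE_trans G h hT h1.2.2 h1.1 h2.1, h1.2.1, h2.2.2⟩⟩
  haveI : IsIrrefl V r := ⟨fun a ha => ltE_irrefl G E a ha.1⟩
  obtain ⟨u, huS, hmin⟩ := (Finite.wellFounded_of_trans_of_irrefl r).has_min (S \ E) hne
  refine ⟨u, huS, Set.insert_subset huS.1 hT.1, ?_⟩
  intro w hw a haE b hbE haw hbw
  have hwSE : w ∈ S \ E := ⟨hw.1, fun hmem => hw.2 (Set.mem_insert_of_mem _ hmem)⟩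
  have key : ∀ b' ∈ E, b' ∉ gstar G w → u ∉ gstar G w → SameComp G (gstar G w)ᶜ u b' := by
    intro b' hb'E hb'w huw
    by_contra hcon
    exact hmin w hwSE ⟨⟨b', hb'E, huw, hb'w, hcon⟩, hwSE, huS⟩
  rcases haE with rfl | haE
  · rcases hbE with rfl | hbE
    · exact sc_refl G haw
    · exact key b hbE hbw haw
  · rcases hbE with rfl | hbE
    · exact sc_symm G (key a haE haw hbw)
    · exact hT.2 w hwSE a haE b hbE haw hbw

lemma build_chain [Fintype V] (G : SimpleGraph V) (h : TypeII G) {S : Set V} (hS : S.Nonempty) :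
    ∀ m : ℕ, m + 1 ≤ S.ncard → ∃ E : ℕ → Set V,
      (∀ i, i ≤ m → Tight G S (E i)) ∧ (∀ i, i ≤ m → (E i).ncard = i + 1) ∧
      (∀ i, i < m → E i ⊂ E (i + 1)) := by
  intro m
  induction m with
  | zero =>
    intro _
    obtain ⟨v, hv⟩ := hS
    refine ⟨fun _ => {v}, fun i _ => tight_singleton G hv, fun i hi => ?_,
      fun i hi => absurd hi (Nat.not_lt_zero i)⟩
    interval_cases i
    simp
  | succ m ih =>
    intro hm
    obtain ⟨E, hTi, hcard, hchain⟩ := ih (le_trans (Nat.le_succ _) hm)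
    have hEm : Tight G S (E m) := hTi m le_rfl
    have hne : (S \ E m).Nonempty := by
      rw [Set.diff_nonempty]
      intro hsub
      have heq : S = E m := le_antisymm hsub hEm.1
      have : S.ncard = m + 1 := heq ▸ hcard m le_rfl
      omega
    obtain ⟨u, huSE, hTu⟩ := tight_extend G h hEm hne
    refine ⟨fun i => if i ≤ m then E i else insert u (E m), ?_, ?_, ?_⟩
    · intro i hi
      by_cases hc : i ≤ m
      · simpa [hc] using hTi i hc
      · simpa [hc] using hTu
    · intro i hi
      by_cases hc : i ≤ m
      · simpa [hc] using hcard i hc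
      · have hieq : i = m + 1 := by omega
        have : (insert u (E m)).ncard = (E m).ncard + 1 :=
          Set.ncard_insert_of_notMem huSE.2 (Set.toFinite _)
        simp only [hc, if_false]
        rw [this, hcard m le_rfl, hieq]
    · intro i hi
      by_cases hc : i < m
      · have h1 : i ≤ m := le_of_lt hc
        have h2 : i + 1 ≤ m := hc
        simpa [h1, h2] using hchain i hc
      · have hieq : i = m := by omega
        subst hieq
        have h1 : i ≤ i := le_rfl
        have h2 : ¬ (i + 1 ≤ i) := by omega
        simpa [h1, h2] using Set.ssubset_insert huSE.2


/-- if Γ is of type II and `S` is a nonempty set of `n` vertices, then there is a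
filtration `E₁ ⊊ E₂ ⊊ ⋯ ⊊ Eₙ = S` with `|E_i| = i` and each `E_i` tight in `S`. -/
theorem stmt_7 [Fintype V] (G : SimpleGraph V) (h : TypeII G)
    (S : Set V) (hS : S.Nonempty) (n : ℕ) (hn : S.ncard = n) :
    ∃ E : Fin n → Set V,
      (∀ i j : Fin n, i < j → E i ⊂ E j) ∧
      (∀ i : Fin n, (E i).ncard = i.1 + 1) ∧
      (∀ i : Fin n, Tight G S (E i)) ∧
      (∀ i : Fin n, i.1 = n - 1 → E i = S) := by
  have hpos : 0 < n := by
    rw [← hn]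
    exact (Set.ncard_pos (Set.toFinite S)).mpr hS
  set m := n - 1 with hm
  have hmn : m + 1 = n := by omega
  obtain ⟨E, hTi, hcard, hchain⟩ := build_chain G h hS m (by omega)
  have mono : ∀ j, j ≤ m → ∀ i, i < j → E i ⊂ E j := by
    intro j
    induction j with
    | zero => intro _ i hi; exact absurd hi (Nat.not_lt_zero i)
    | succ j ihj =>
      intro hj i hi
      rcases Nat.lt_succ_iff_lt_or_eq.mp hi with hlt | heq
      · exact (ihj (by omega) i hlt).trans (hchain j (by omega))
      · subst heq; exact hchain i (by omega)
  refine ⟨fun i => E i.1, ?_, ?_, ?_, ?_⟩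
  · intro i j hij
    exact mono j.1 (by omega) i.1 hij
  · intro i
    exact hcard i.1 (by omega)
  · intro i
    exact hTi i.1 (by omega)
  · intro i hieq
    have hsub : E i.1 ⊆ S := (hTi i.1 (by omega)).1
    have hc : (E i.1).ncard = n := by rw [hcard i.1 (by omega), hieq]; omega
    exact Set.eq_of_subset_of_ncard_le hsub (by rw [hc, hn]) (Set.toFinite S)
end
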